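/- arXiv:0810.2650 — 11 statements merged into one kernel-verified Lean document; each statement's English description precedes it below -/
import Mathlib

section
/- For all integers m, n, t with m ≤ -1, n ≤ -1, t ≤ -1, and not all of m, n, t equal to -1, the set of triples (a, b, c) of nonzero real numbers satisfying 1 + a + 1/b = m, 1 + b + 1/c = n, 1 + c + 1/a = t has exactly two elements. -/
/-!
Put `M = m - 1`, `N = n - 1`, `T = t - 1`. The first and third equations give `b = 1 / (M - a)`
and `c = T - 1 / a`, and then the second one becomes the quadratic equation
`(N T - 1) a² + (M + T - N - N M T) a + (N M - 1) = 0`, so solutions correspond bijectively to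
its roots. For `M, N, T ≤ -2` the leading coefficient is positive and the value at `a = -1` is
negative unless `M = N = T = -2` (where `-1` is a double root), so there are exactly two roots.
-/

theorem discrim_pos_of_quadratic_neg {K : Type*} [Field K] [LinearOrder K] [IsStrictOrderedRing K]
    {a b c x : K} (ha : 0 < a) (hx : a * (x * x) + b * x + c < 0) : 0 < discrim a b c := by
  have : discrim a b c = (2 * a * x + b) ^ 2 - 4 * a * (a * (x * x) + b * x + c) := by
    rw [discrim]; ring
  rw [this]
  nlinarith [sq_nonneg (2 * a * x + b)]

theorem ncard_setOf_quadratic_eq_zero {K : Type*} [Field K] [NeZero (2 : K)] {a b c s : K}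
    (ha : a ≠ 0) (hs : s ≠ 0) (h : discrim a b c = s * s) :
    {x : K | a * (x * x) + b * x + c = 0}.ncard = 2 := by
  have hroots :
      {x : K | a * (x * x) + b * x + c = 0} = {(-b + s) / (2 * a), (-b - s) / (2 * a)} := by
    ext x
    exact quadratic_eq_zero_iff ha h x
  rw [hroots, Set.ncard_pair]
  intro heq
  rw [div_left_inj' (mul_ne_zero two_ne_zero ha)] at heq
  have : 2 * s = 0 := by linear_combination heq
  exact hs ((mul_eq_zero.1 this).resolve_left two_ne_zero)

namespace QSystem

def solutions (M N T : ℝ) : Set (ℝ × ℝ × ℝ) :=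
  {p | p.1 ≠ 0 ∧ p.2.1 ≠ 0 ∧ p.2.2 ≠ 0 ∧
    p.1 + 1 / p.2.1 = M ∧ p.2.1 + 1 / p.2.2 = N ∧ p.2.2 + 1 / p.1 = T}

variable {M N T : ℝ}

theorem quadratic_eq_zero_of_mem_solutions {a b c : ℝ} (h : (a, b, c) ∈ solutions M N T) :
    (N * T - 1) * (a * a) + (M + T - N - N * M * T) * a + (N * M - 1) = 0 ∧
      b = 1 / (M - a) ∧ c = T - 1 / a := by
  obtain ⟨ha, hb, hc, h₁, h₂, h₃⟩ := h
  have hb' : b * (M - a) = 1 := by rw [← h₁]; field_simp; ring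
  have hc' : c * a = T * a - 1 := by rw [← h₃]; field_simp; ring
  have h₂' : b * c + 1 = N * c := by rw [← h₂]; field_simp
  refine ⟨?_, eq_one_div_of_mul_eq_one_left hb', by rw [← h₃]; ring⟩
  linear_combination (-(c * a)) * hb' + (a * (M - a)) * h₂' + (N * (M - a) - 1) * hc'

theorem mem_solutions_of_quadratic_eq_zero (hMN : M * N ≠ 1) (hMT : M * T ≠ 1) {x : ℝ}
    (hx : (N * T - 1) * (x * x) + (M + T - N - N * M * T) * x + (N * M - 1) = 0) :
    (x, 1 / (M - x), T - 1 / x) ∈ solutions M N T := by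
  have hx₀ : x ≠ 0 := by
    rintro rfl
    exact hMN (by linear_combination hx)
  have hMx : M - x ≠ 0 := by
    intro h
    exact hMT (by rw [show x = M by linarith] at hx; linear_combination hx)
  have hTx : T * x - 1 ≠ 0 := by
    intro h
    have : x * (M - x) = 0 := by linear_combination hx - (N * x + 1 - N * M) * h
    exact mul_ne_zero hx₀ hMx this
  have hc : T - 1 / x = (T * x - 1) / x := by field_simp
  refine ⟨hx₀, one_div_ne_zero hMx, hc ▸ div_ne_zero hTx hx₀, by field_simp; ring, ?_,
    by ring⟩
  rw [hc, one_div_div, div_add_div _ _ hMx hTx, div_eq_iff (mul_ne_zero hMx hTx)]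
  linear_combination hx

theorem solutions_eq_image (hMN : M * N ≠ 1) (hMT : M * T ≠ 1) :
    solutions M N T = (fun x ↦ (x, 1 / (M - x), T - 1 / x)) ''
      {x | (N * T - 1) * (x * x) + (M + T - N - N * M * T) * x + (N * M - 1) = 0} := by
  ext ⟨a, b, c⟩
  constructor
  · intro h
    obtain ⟨hq, rfl, rfl⟩ := quadratic_eq_zero_of_mem_solutions h
    exact ⟨a, hq, rfl⟩
  · rintro ⟨x, hx, hp⟩
    rw [← hp]
    exact mem_solutions_of_quadratic_eq_zero hMN hMT hx

theorem quadratic_neg_at_neg_one (hM : M ≤ -2) (hN : N ≤ -2) (hT : T ≤ -2)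
    (h : M + N + T < -6) :
    (N * T - 1) * (-1 * -1) + (M + T - N - N * M * T) * -1 + (N * M - 1) < 0 := by
  nlinarith [mul_nonneg (by linarith : (0:ℝ) ≤ -2 - M) (by linarith : (0:ℝ) ≤ -2 - T)]

theorem ncard_solutions_eq_two (hM : M ≤ -2) (hN : N ≤ -2) (hT : T ≤ -2)
    (h : M + N + T < -6) :
    (solutions M N T).ncard = 2 := by
  have hMN : M * N ≠ 1 := by nlinarith
  have hMT : M * T ≠ 1 := by nlinarith
  have hA : 0 < N * T - 1 := by nlinarith
  have hdisc := discrim_pos_of_quadratic_neg hA (quadratic_neg_at_neg_one hM hN hT h)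
  rw [solutions_eq_image hMN hMT, Set.ncard_image_of_injective _ fun x y h ↦ congrArg Prod.fst h]
  exact ncard_setOf_quadratic_eq_zero hA.ne' (Real.sqrt_pos.2 hdisc).ne'
    (Real.mul_self_sqrt hdisc.le).symm

end QSystem

/-- For all integers m, n, t with m ≤ -1, n ≤ -1, t ≤ -1, not all equal
to -1, the set of triples (a, b, c) of nonzero real numbers satisfying the Q(m,n,t)
system has exactly two elements. -/
theorem Q_system_has_exactly_two_solutions
    (m n t : ℤ) (hm : m ≤ -1) (hn : n ≤ -1) (ht : t ≤ -1)
    (hnot : ¬(m = -1 ∧ n = -1 ∧ t = -1)) :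
    {p : ℝ × ℝ × ℝ | p.1 ≠ 0 ∧ p.2.1 ≠ 0 ∧ p.2.2 ≠ 0 ∧
      1 + p.1 + 1 / p.2.1 = (m : ℝ) ∧
      1 + p.2.1 + 1 / p.2.2 = (n : ℝ) ∧
      1 + p.2.2 + 1 / p.1 = (t : ℝ)}.ncard = 2 := by
  have hsum : (m + n + t : ℝ) ≤ -4 := by exact_mod_cast (by omega : m + n + t ≤ -4)
  have hm' : (m : ℝ) ≤ -1 := by exact_mod_cast hm
  have hn' : (n : ℝ) ≤ -1 := by exact_mod_cast hn
  have ht' : (t : ℝ) ≤ -1 := by exact_mod_cast ht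
  convert QSystem.ncard_solutions_eq_two (M := m - 1) (N := n - 1) (T := t - 1)
    (by linarith) (by linarith) (by linarith) (by linarith) using 2
  ext p
  simp only [QSystem.solutions, Set.mem_ofPred_eq, add_assoc, ← eq_sub_iff_add_eq']
end

section
/- For all integers m, n, t with m ≤ -1, n ≤ -1, t ≤ -1, and not all of m, n, t equal to -1, there exist nonzero real numbers a₁, b₁, c₁ solving the system 1 + a + 1/b = m, 1 + b + 1/c = n, 1 + c + 1/a = t with -1 < a₁ < 0, -1 < b₁ < 0, -1 < c₁ < 0, and there exist nonzero real numbers a₂, b₂, c₂ solving the same system with a₂ < -1, b₂ < -1, c₂ < -1. -/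
/-!
Write `qStep k x = 1 / (k - 1 - x)`, the value of `y` solving `1 + x + 1 / y = k`. A solution of
the Q(m,n,t) system is a fixed point `b` of `qStep m ∘ qStep t ∘ qStep n` (with `c = qStep n b`,
`a = qStep t c`). For `k ≤ -1` each `qStep k` maps `[-1, 0]` continuously into `[-1, 0)`, and it moves
`-1` into the open interval unless `k = -1`; so the fixed point given by the intermediate value
theorem lies in `(-1, 0)`. The solution below `-1` comes from the first one for Q(m,t,n) by
inverting every coordinate.
-/

open Set

def QSystem (m n t a b c : ℝ) : Prop :=
  1 + a + 1 / b = m ∧ 1 + b + 1 / c = n ∧ 1 + c + 1 / a = t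

theorem QSystem.one_div_of_swap {m n t x y z : ℝ} (h : QSystem m t n x y z) :
    QSystem m n t (1 / y) (1 / x) (1 / z) := by
  obtain ⟨hx, hy, hz⟩ := h
  refine ⟨?_, ?_, ?_⟩ <;> rw [one_div_one_div] <;> linarith

noncomputable def qStep (k x : ℝ) : ℝ := 1 / (k - 1 - x)

section qStep

variable {k x : ℝ}

theorem one_add_add_one_div_qStep : 1 + x + 1 / qStep k x = k := by
  rw [qStep, one_div_one_div]
  ring

theorem qStep_mem_Ico (h : k ≤ x) : qStep k x ∈ Ico (-1) 0 := by
  have hneg : k - 1 - x < 0 := by linarith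
  refine ⟨?_, one_div_neg.mpr hneg⟩
  rw [qStep, le_div_iff_of_neg hneg]
  linarith

theorem qStep_mem_Ioo (h : k < x) : qStep k x ∈ Ioo (-1) 0 := by
  have hneg : k - 1 - x < 0 := by linarith
  refine ⟨?_, one_div_neg.mpr hneg⟩
  rw [qStep, lt_div_iff_of_neg hneg]
  linarith

theorem neg_one_lt_qStep (hk : k ≤ -1) (hx : -1 ≤ x) (h : k < -1 ∨ -1 < x) :
    -1 < qStep k x :=
  (qStep_mem_Ioo (h.elim (·.trans_le hx) hk.trans_lt)).1

theorem mapsTo_qStep (hk : k ≤ -1) : MapsTo (qStep k) (Icc (-1) 0) (Icc (-1) 0) :=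
  fun _ hx ↦ Ico_subset_Icc_self (qStep_mem_Ico (hk.trans hx.1))

theorem continuousOn_qStep (hk : k ≤ -1) : ContinuousOn (qStep k) (Icc (-1) 0) :=
  continuousOn_const.div (continuousOn_const.sub continuousOn_id)
    fun _ hx ↦ by linarith [hx.1]

end qStep

theorem exists_qSystem_mem_Ioo {m n t : ℝ} (hm : m ≤ -1) (hn : n ≤ -1) (ht : t ≤ -1)
    (hlt : m < -1 ∨ n < -1 ∨ t < -1) :
    ∃ a b c, QSystem m n t a b c ∧ a ∈ Ioo (-1) 0 ∧ b ∈ Ioo (-1) 0 ∧ c ∈ Ioo (-1) 0 := by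
  set g := qStep m ∘ qStep t ∘ qStep n
  have hg_maps : MapsTo g (Icc (-1) 0) (Icc (-1) 0) :=
    (mapsTo_qStep hm).comp ((mapsTo_qStep ht).comp (mapsTo_qStep hn))
  have hg_cont : ContinuousOn g (Icc (-1) 0) :=
    (continuousOn_qStep hm).comp ((continuousOn_qStep ht).comp (continuousOn_qStep hn)
      (mapsTo_qStep hn)) ((mapsTo_qStep ht).comp (mapsTo_qStep hn))
  have hg_left : -1 < g (-1) := by
    have hc : -1 ≤ qStep n (-1) := (qStep_mem_Ico hn).1
    have ha : -1 ≤ qStep t (qStep n (-1)) := (qStep_mem_Ico (ht.trans hc)).1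
    rcases hlt with hm' | hn' | ht'
    · exact neg_one_lt_qStep hm ha (.inl hm')
    · exact neg_one_lt_qStep hm ha
        (.inr (neg_one_lt_qStep ht hc (.inr (neg_one_lt_qStep hn le_rfl (.inl hn')))))
    · exact neg_one_lt_qStep hm ha (.inr (neg_one_lt_qStep ht hc (.inl ht')))
  obtain ⟨b, hb, hgb⟩ := exists_mem_Icc_isFixedPt_of_mapsTo hg_cont (by norm_num) hg_maps
  have hb_Ioo : b ∈ Ioo (-1) 0 := by
    refine ⟨hb.1.lt_of_ne ?_, ?_⟩
    · rintro rfl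
      exact hg_left.ne' hgb
    · rw [← hgb.eq]
      exact (qStep_mem_Ico (hm.trans (mapsTo_qStep ht (mapsTo_qStep hn hb)).1)).2
  have hc := qStep_mem_Ioo (hn.trans_lt hb_Ioo.1)
  have ha := qStep_mem_Ioo (ht.trans_lt hc.1)
  refine ⟨qStep t (qStep n b), b, qStep n b, ⟨?_, ?_, ?_⟩, ha, hb_Ioo, hc⟩
  · nth_rw 2 [← hgb.eq]
    exact one_add_add_one_div_qStep
  · exact one_add_add_one_div_qStep
  · exact one_add_add_one_div_qStep

/-- For all integers m, n, t ≤ -1, not all -1, the Q(m,n,t) system has a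
solution with all coordinates in (-1,0) and a solution with all coordinates < -1. -/
theorem Q_system_two_kinds_of_solutions
    (m n t : ℤ) (hm : m ≤ -1) (hn : n ≤ -1) (ht : t ≤ -1)
    (hnot : ¬(m = -1 ∧ n = -1 ∧ t = -1)) :
    (∃ a b c : ℝ, a ≠ 0 ∧ b ≠ 0 ∧ c ≠ 0 ∧
      1 + a + 1 / b = (m : ℝ) ∧ 1 + b + 1 / c = (n : ℝ) ∧ 1 + c + 1 / a = (t : ℝ) ∧
      -1 < a ∧ a < 0 ∧ -1 < b ∧ b < 0 ∧ -1 < c ∧ c < 0) ∧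
    (∃ a b c : ℝ, a ≠ 0 ∧ b ≠ 0 ∧ c ≠ 0 ∧
      1 + a + 1 / b = (m : ℝ) ∧ 1 + b + 1 / c = (n : ℝ) ∧ 1 + c + 1 / a = (t : ℝ) ∧
      a < -1 ∧ b < -1 ∧ c < -1) := by
  have hm' : (m : ℝ) ≤ -1 := by exact_mod_cast hm
  have hn' : (n : ℝ) ≤ -1 := by exact_mod_cast hn
  have ht' : (t : ℝ) ≤ -1 := by exact_mod_cast ht
  have hlt : (m : ℝ) < -1 ∨ (n : ℝ) < -1 ∨ (t : ℝ) < -1 := by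
    have : m < -1 ∨ n < -1 ∨ t < -1 := by omega
    exact_mod_cast this
  obtain ⟨a, b, c, ⟨h₁, h₂, h₃⟩, ha, hb, hc⟩ := exists_qSystem_mem_Ioo hm' hn' ht' hlt
  obtain ⟨x, y, z, hQ, hx, hy, hz⟩ := exists_qSystem_mem_Ioo hm' ht' hn' (by tauto)
  obtain ⟨h₁', h₂', h₃'⟩ := hQ.one_div_of_swap
  have hy' := one_div_lt_neg_one hy.2 hy.1
  have hx' := one_div_lt_neg_one hx.2 hx.1
  have hz' := one_div_lt_neg_one hz.2 hz.1
  exact ⟨⟨a, b, c, ha.2.ne, hb.2.ne, hc.2.ne, h₁, h₂, h₃, ha.1, ha.2, hb.1, hb.2, hc.1, hc.2⟩,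
    ⟨1 / y, 1 / x, 1 / z, by linarith, by linarith, by linarith, h₁', h₂', h₃', hy', hx', hz'⟩⟩
end

section
/- For all integers m, n, t with m ≤ -1, n ≤ -1, t ≤ -1, and not all of m, n, t equal to -1, if a, b, c are nonzero real numbers satisfying 1 + a + 1/b = m, 1 + b + 1/c = n, 1 + c + 1/a = t, then each of a, b, c is irrational. -/
/-!
Writing `k = (m-1)(n-1)(t-1) - (m-1) - (n-1) - (t-1)`, the product `q = abc` of a solution
satisfies `q² - k q + 1 = 0`. Under the sign conditions `k ≤ -3`, so by the rational root theorem
`q` is irrational, hence one of `a, b, c` is. Each equation `1/b = m - 1 - a` shows that `a` and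
`b` are rational together, and likewise `b` and `c`, so all three are irrational.
-/

open Polynomial

theorem irrational_of_sq_sub_intCast_mul_add_one_eq_zero {k : ℤ} (hk_two : k ≠ 2)
    (hk_neg_two : k ≠ -2) {x : ℝ} (hx : x ^ 2 - k * x + 1 = 0) : Irrational x := by
  rintro ⟨r, rfl⟩
  have hr : r ^ 2 - k * r + 1 = 0 := by exact_mod_cast hx
  obtain ⟨z, rfl⟩ := isInteger_of_is_root_of_monic (p := X ^ 2 - C k * X + 1) (r := r)
    (by monicity!) (by simpa using hr)
  have hz : z * (k - z) = 1 := by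
    rw [algebraMap_int_eq, eq_intCast] at hr
    exact_mod_cast (by linear_combination -hr : (z * (k - z) : ℚ) = 1)
  rcases Int.eq_one_or_neg_one_of_mul_eq_one hz with rfl | rfl <;> omega

theorem irrational_iff_of_one_add_add_one_div_eq_intCast {a b : ℝ} {m : ℤ}
    (h : 1 + a + 1 / b = m) : Irrational a ↔ Irrational b := by
  have hb : b⁻¹ = ((m - 1 : ℤ) : ℝ) - a := by push_cast; linarith [one_div b]
  rw [← irrational_inv_iff (x := b), hb, irrational_intCast_sub_iff]

theorem sq_sub_mul_add_one_eq_zero_of_Q_system {K : Type*} [Field K] {m n t : ℤ} {a b c : K}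
    (ha : a ≠ 0) (hb : b ≠ 0) (hc : c ≠ 0)
    (h1 : 1 + a + 1 / b = m) (h2 : 1 + b + 1 / c = n) (h3 : 1 + c + 1 / a = t) :
    (a * b * c) ^ 2 - ((m - 1) * (n - 1) * (t - 1) - (m - 1) - (n - 1) - (t - 1) : ℤ) * (a * b * c)
      + 1 = 0 := by
  have e1 : b * (m - 1 - a) = 1 := by rw [← h1]; field_simp; ring
  have e2 : c * (n - 1 - b) = 1 := by rw [← h2]; field_simp; ring
  have e3 : a * (t - 1 - c) = 1 := by rw [← h3]; field_simp; ring
  push_cast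
  linear_combination (a * c - (n - 1) * (t - 1) * a * c) * e1
    + (a * b - (t - 1) * a - (t - 1) * a * a * b) * e2 + (-1 - a * b - a * b * b * c) * e3

theorem Q_system_trace_le_neg_three {m n t : ℤ} (hm : m ≤ -1) (hn : n ≤ -1) (ht : t ≤ -1)
    (hnot : ¬(m = -1 ∧ n = -1 ∧ t = -1)) :
    (m - 1) * (n - 1) * (t - 1) - (m - 1) - (n - 1) - (t - 1) ≤ -3 := by
  rcases (by omega : m ≤ -2 ∨ n ≤ -2 ∨ t ≤ -2) with h | h | h <;>
    nlinarith [mul_pos (by linarith : (0 : ℤ) < 1 - m) (by linarith : (0 : ℤ) < 1 - n),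
      mul_pos (by linarith : (0 : ℤ) < 1 - n) (by linarith : (0 : ℤ) < 1 - t),
      mul_pos (by linarith : (0 : ℤ) < 1 - m) (by linarith : (0 : ℤ) < 1 - t)]

/-- For integers m, n, t ≤ -1, not all -1, any nonzero real solution
(a, b, c) of the Q(m,n,t) system consists of irrational numbers. -/
theorem Q_system_solutions_irrational
    (m n t : ℤ) (hm : m ≤ -1) (hn : n ≤ -1) (ht : t ≤ -1)
    (hnot : ¬(m = -1 ∧ n = -1 ∧ t = -1))
    (a b c : ℝ) (ha : a ≠ 0) (hb : b ≠ 0) (hc : c ≠ 0)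
    (h1 : 1 + a + 1 / b = (m : ℝ)) (h2 : 1 + b + 1 / c = (n : ℝ))
    (h3 : 1 + c + 1 / a = (t : ℝ)) :
    Irrational a ∧ Irrational b ∧ Irrational c := by
  have hk := Q_system_trace_le_neg_three hm hn ht hnot
  have habc : Irrational (a * b * c) := irrational_of_sq_sub_intCast_mul_add_one_eq_zero
    (by omega) (by omega) (sq_sub_mul_add_one_eq_zero_of_Q_system ha hb hc h1 h2 h3)
  have hab := irrational_iff_of_one_add_add_one_div_eq_intCast h1
  have hbc := irrational_iff_of_one_add_add_one_div_eq_intCast h2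
  rcases habc.mul_cases with hab' | hc'
  · rcases hab'.mul_cases with ha' | hb' <;> tauto
  · tauto
end

section
/- Let m, n, t be integers with m ≤ -1, n ≤ -1, t ≤ -1, and let a, b, c be nonzero real numbers satisfying 1 + a + 1/b = m, 1 + b + 1/c = n, 1 + c + 1/a = t. If -1 < a < 0, then -1 < b < 0 and -1 < c < 0; and if a < -1, then b < -1 and c < -1. -/
section

variable {α : Type*} [Field α] [LinearOrder α] [IsStrictOrderedRing α] {x y k : α}

theorem one_div_mem_Ioo_of_lt_neg_one (hx : x < -1) : 1 / x ∈ Set.Ioo (-1) 0 := by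
  have hx0 : x < 0 := by linarith
  refine ⟨?_, one_div_neg.mpr hx0⟩
  rw [lt_div_iff_of_neg hx0]
  linarith

theorem mem_Ioo_of_one_div_lt_neg_one (h : 1 / x < -1) : x ∈ Set.Ioo (-1) 0 := by
  simpa using one_div_mem_Ioo_of_lt_neg_one h

theorem mem_Ioo_of_one_add_add_one_div_eq (hk : k ≤ -1) (h : 1 + x + 1 / y = k) (hx : -1 < x) :
    y ∈ Set.Ioo (-1) 0 :=
  mem_Ioo_of_one_div_lt_neg_one (by linarith)

theorem lt_neg_one_of_one_add_add_one_div_eq (hk : k ≤ -1) (h : 1 + x + 1 / y = k)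
    (hy : y < -1) : x < -1 := by
  linarith [(one_div_mem_Ioo_of_lt_neg_one hy).1]

end

theorem Q_system_sign_propagation_general
    (m n t : ℤ) (hm : m ≤ -1) (hn : n ≤ -1) (ht : t ≤ -1)
    (a b c : ℝ)
    (h1 : 1 + a + 1 / b = (m : ℝ)) (h2 : 1 + b + 1 / c = (n : ℝ))
    (h3 : 1 + c + 1 / a = (t : ℝ)) :
    ((-1 < a ∧ a < 0) → ((-1 < b ∧ b < 0) ∧ (-1 < c ∧ c < 0))) ∧
    (a < -1 → (b < -1 ∧ c < -1)) := by
  have hm' : (m : ℝ) ≤ -1 := by exact_mod_cast hm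
  have hn' : (n : ℝ) ≤ -1 := by exact_mod_cast hn
  have ht' : (t : ℝ) ≤ -1 := by exact_mod_cast ht
  constructor
  · rintro ⟨ha, -⟩
    have hb := mem_Ioo_of_one_add_add_one_div_eq hm' h1 ha
    exact ⟨hb, mem_Ioo_of_one_add_add_one_div_eq hn' h2 hb.1⟩
  · intro ha
    have hc := lt_neg_one_of_one_add_add_one_div_eq ht' h3 ha
    exact ⟨lt_neg_one_of_one_add_add_one_div_eq hn' h2 hc, hc⟩

/-- For integers m, n, t ≤ -1 and a nonzero real solution (a, b, c) of
the Q(m,n,t) system: if -1 < a < 0 then -1 < b < 0 and -1 < c < 0; and if a < -1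
then b < -1 and c < -1. -/
theorem Q_system_sign_propagation
    (m n t : ℤ) (hm : m ≤ -1) (hn : n ≤ -1) (ht : t ≤ -1)
    (a b c : ℝ) (ha : a ≠ 0) (hb : b ≠ 0) (hc : c ≠ 0)
    (h1 : 1 + a + 1 / b = (m : ℝ)) (h2 : 1 + b + 1 / c = (n : ℝ))
    (h3 : 1 + c + 1 / a = (t : ℝ)) :
    ((-1 < a ∧ a < 0) → ((-1 < b ∧ b < 0) ∧ (-1 < c ∧ c < 0))) ∧
    (a < -1 → (b < -1 ∧ c < -1)) :=
  Q_system_sign_propagation_general m n t hm hn ht a b c h1 h2 h3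
end

section
/- Let m, n, t be integers and set M = 1 - m, N = 1 - n, T = 1 - t. If a, b, c are nonzero real numbers satisfying 1 + a + 1/b = m, 1 + b + 1/c = n, 1 + c + 1/a = t, then (N·T - 1)·a² + (M·N·T - M + N - T)·a + (M·N - 1) = 0. -/
/-! Clearing denominators turns the system into `a b + 1 + M b = 0`, `b c + 1 + N c = 0`,
`c a + 1 + T a = 0`. Solving the first two for `b` and `c` and substituting into the third gives
the quadratic, which is therefore a polynomial combination of the three relations. -/

section Elimination

variable {K : Type*} [Field K]

theorem mul_add_one_add_mul_eq_zero_of_one_add_add_one_div_eq {x y k : K} (hy : y ≠ 0)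
    (h : 1 + x + 1 / y = k) : x * y + 1 + (1 - k) * y = 0 := by
  rw [← h]
  field_simp
  ring

theorem quadratic_of_cyclic_relations {a b c M N T : K}
    (hab : a * b + 1 + M * b = 0) (hbc : b * c + 1 + N * c = 0) (hca : c * a + 1 + T * a = 0) :
    (N * T - 1) * a ^ 2 + (M * N * T - M + N - T) * a + (M * N - 1) = 0 := by
  linear_combination (a * c) * hab - a * (M + a) * hbc + (a * N - 1 + M * N) * hca

end Elimination

/-- Eliminating b and c from the Q(m,n,t) system yields the quadratic
equation (NT - 1)a² + (MNT - M + N - T)a + (MN - 1) = 0, where M = 1-m, N = 1-n,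
T = 1-t. -/
theorem Q_system_quadratic_elimination
    (m n t : ℤ) (M N T : ℤ) (hM : M = 1 - m) (hN : N = 1 - n) (hT : T = 1 - t)
    (a b c : ℝ) (ha : a ≠ 0) (hb : b ≠ 0) (hc : c ≠ 0)
    (h1 : 1 + a + 1 / b = (m : ℝ)) (h2 : 1 + b + 1 / c = (n : ℝ))
    (h3 : 1 + c + 1 / a = (t : ℝ)) :
    ((N : ℝ) * T - 1) * a ^ 2 + ((M : ℝ) * N * T - M + N - T) * a
      + ((M : ℝ) * N - 1) = 0 := by
  have hM' : (M : ℝ) = 1 - m := by exact_mod_cast hM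
  have hN' : (N : ℝ) = 1 - n := by exact_mod_cast hN
  have hT' : (T : ℝ) = 1 - t := by exact_mod_cast hT
  apply quadratic_of_cyclic_relations
  · simpa only [hM'] using mul_add_one_add_mul_eq_zero_of_one_add_add_one_div_eq hb h1
  · simpa only [hN'] using mul_add_one_add_mul_eq_zero_of_one_add_add_one_div_eq hc h2
  · simpa only [hT'] using mul_add_one_add_mul_eq_zero_of_one_add_add_one_div_eq ha h3
end

section
/- For all integers M, N, T with M ≥ 2, N ≥ 2, T ≥ 2, and not all of M, N, T equal to 2, the real number √((M·N·T - M - N - T)² - 4) is irrational. -/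
/-!
The integer `k = MNT - M - N - T` is at least `3`, and for `|k| ≥ 3` the number `k² - 4` lies
strictly between the consecutive squares `(|k| - 1)²` and `k²`, so it is a positive non-square.
-/

theorem Int.not_isSquare_of_sq_lt_of_lt_succ_sq {m n : ℤ} (hm : 0 ≤ m) (hl : m ^ 2 < n)
    (hr : n < (m + 1) ^ 2) : ¬IsSquare n := by
  rintro ⟨r, rfl⟩
  rw [← sq] at hl hr
  have hlow : m < |r| := by simpa [abs_of_nonneg hm] using sq_lt_sq.mp hl
  have hhigh : |r| < m + 1 := by simpa [abs_of_nonneg (by omega : 0 ≤ m + 1)] using sq_lt_sq.mp hr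
  omega

theorem Int.not_isSquare_sq_sub_four {k : ℤ} (hk : 3 ≤ |k|) : ¬IsSquare (k ^ 2 - 4) := by
  rw [← sq_abs]
  exact Int.not_isSquare_of_sq_lt_of_lt_succ_sq (m := |k| - 1) (by omega) (by nlinarith)
    (by nlinarith)

theorem Int.three_le_mul_mul_sub_sub_sub {M N T : ℤ} (hM : 2 ≤ M) (hN : 2 ≤ N) (hT : 2 ≤ T)
    (hnot : ¬(M = 2 ∧ N = 2 ∧ T = 2)) : 3 ≤ M * N * T - M - N - T := by
  rcases (by omega : 3 ≤ M ∨ 3 ≤ N ∨ 3 ≤ T) with h | h | h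
  · nlinarith [mul_nonneg (by omega : 0 ≤ M - 3) (by nlinarith : 0 ≤ N * T - 1)]
  · nlinarith [mul_nonneg (by omega : 0 ≤ N - 3) (by nlinarith : 0 ≤ M * T - 1)]
  · nlinarith [mul_nonneg (by omega : 0 ≤ T - 3) (by nlinarith : 0 ≤ M * N - 1)]

/-- For integers M, N, T ≥ 2, not all equal to 2, the square root of the
discriminant (MNT - M - N - T)² - 4 is irrational. -/
theorem sqrt_discriminant_irrational
    (M N T : ℤ) (hM : 2 ≤ M) (hN : 2 ≤ N) (hT : 2 ≤ T)
    (hnot : ¬(M = 2 ∧ N = 2 ∧ T = 2)) :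
    Irrational (Real.sqrt (((M : ℝ) * N * T - M - N - T) ^ 2 - 4)) := by
  set k : ℤ := M * N * T - M - N - T with hk_def
  have hk : 3 ≤ k := Int.three_le_mul_mul_sub_sub_sub hM hN hT hnot
  have hcast : ((M : ℝ) * N * T - M - N - T) ^ 2 - 4 = ((k ^ 2 - 4 : ℤ) : ℝ) := by
    push_cast [hk_def]
    ring
  rw [hcast, irrational_sqrt_intCast_iff_of_nonneg (by nlinarith)]
  exact Int.not_isSquare_sq_sub_four (hk.trans (le_abs_self k))
end

section
/- Let M, N, T be integers with M ≥ 2, N ≥ 2, T ≥ 2, not all equal to 2, and define f(x) = (N·T - 1)·x² + (M·N·T - M + N - T)·x + (M·N - 1) for real x. Then there exist real numbers a₁ and a₂ with f(a₁) = 0, f(a₂) = 0, and a₂ < -1 < a₁ < 0, and every real root of f equals a₁ or a₂. -/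
/-!
An upward parabola that is negative at `r` has two real roots, one on each side of `r`, and if it
is positive at some `p > r` then the larger root lies below `p`. For the given quadratic take
`r = -1` and `p = 0`: `f 0 = MN - 1 > 0`, and writing `M = m + 2`, `N = n + 2`, `T = t + 2` gives
`-f (-1) = m + n + t + mn + nt + 2mt + mnt`, which is positive unless `m = n = t = 0`.
-/

theorem quadratic_eq_mul_sub_mul_sub {K : Type*} [Field K] [NeZero (2 : K)] {a b c s : K}
    (ha : a ≠ 0) (h : discrim a b c = s * s) (x : K) :
    a * x ^ 2 + b * x + c = a * (x - (-b + s) / (2 * a)) * (x - (-b - s) / (2 * a)) := by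
  rw [discrim] at h
  field_simp
  linear_combination -h

theorem exists_quadratic_roots_of_neg_of_pos {a b c r p : ℝ} (ha : 0 < a)
    (hr : a * r ^ 2 + b * r + c < 0) (hrp : r < p) (hp : 0 < a * p ^ 2 + b * p + c) :
    ∃ x₁ x₂ : ℝ, a * x₁ ^ 2 + b * x₁ + c = 0 ∧ a * x₂ ^ 2 + b * x₂ + c = 0 ∧
      x₂ < r ∧ r < x₁ ∧ x₁ < p ∧
      ∀ x : ℝ, a * x ^ 2 + b * x + c = 0 → x = x₁ ∨ x = x₂ := by
  -- `discrim a b c = (2ar + b)² - 4a (ar² + br + c)`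
  have hdisc : 0 ≤ discrim a b c := by
    rw [discrim]; nlinarith [sq_nonneg (2 * a * r + b)]
  obtain ⟨s, hs, hs0⟩ : ∃ s, discrim a b c = s * s ∧ 0 ≤ s :=
    ⟨_, (Real.mul_self_sqrt hdisc).symm, Real.sqrt_nonneg _⟩
  have hfactor := quadratic_eq_mul_sub_mul_sub ha.ne' hs
  generalize hx₁ : (-b + s) / (2 * a) = x₁ at hfactor
  generalize hx₂ : (-b - s) / (2 * a) = x₂ at hfactor
  have hx₂x₁ : x₂ ≤ x₁ := by
    rw [← hx₁, ← hx₂]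
    gcongr
    linarith
  have hr' : (r - x₁) * (r - x₂) < 0 := by
    rw [hfactor, mul_assoc] at hr
    exact neg_of_mul_neg_right hr ha.le
  have hp' : 0 < (p - x₁) * (p - x₂) := by
    rw [hfactor, mul_assoc] at hp
    exact pos_of_mul_pos_right hp ha.le
  obtain ⟨hx₂r, hrx₁⟩ : x₂ < r ∧ r < x₁ := by
    rcases mul_neg_iff.mp hr' with h | h <;> constructor <;> linarith
  refine ⟨x₁, x₂, by simp [hfactor], by simp [hfactor], hx₂r, hrx₁, ?_, ?_⟩
  · exact sub_pos.mp (pos_of_mul_pos_left hp' (by linarith))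
  · intro x hx
    rw [hfactor, mul_assoc] at hx
    simpa [ha.ne', sub_eq_zero] using hx

theorem quadratic_neg_at_neg_one (M N T : ℤ) (hM : 2 ≤ M) (hN : 2 ≤ N) (hT : 2 ≤ T)
    (hnot : ¬(M = 2 ∧ N = 2 ∧ T = 2)) :
    (N * T - 1) * (-1) ^ 2 + (M * N * T - M + N - T) * (-1) + (M * N - 1) < 0 := by
  obtain ⟨m, rfl⟩ : ∃ m : ℕ, M = m + 2 := ⟨(M - 2).toNat, by omega⟩
  obtain ⟨n, rfl⟩ : ∃ n : ℕ, N = n + 2 := ⟨(N - 2).toNat, by omega⟩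
  obtain ⟨t, rfl⟩ : ∃ t : ℕ, T = t + 2 := ⟨(T - 2).toNat, by omega⟩
  have hpos : (0 : ℤ) < m + n + t := by omega
  have hprod : (0 : ℤ) ≤ m * n + n * t + 2 * m * t + m * n * t := by positivity
  linear_combination hpos + hprod

/-- For integers M, N, T ≥ 2, not all 2, the quadratic
f(x) = (NT - 1)x² + (MNT - M + N - T)x + (MN - 1) has two real roots a₁, a₂ with
a₂ < -1 < a₁ < 0, and every real root of f is one of them. -/
theorem quadratic_two_roots
    (M N T : ℤ) (hM : 2 ≤ M) (hN : 2 ≤ N) (hT : 2 ≤ T)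
    (hnot : ¬(M = 2 ∧ N = 2 ∧ T = 2))
    (f : ℝ → ℝ)
    (hf : ∀ x : ℝ, f x = ((N : ℝ) * T - 1) * x ^ 2
        + ((M : ℝ) * N * T - M + N - T) * x + ((M : ℝ) * N - 1)) :
    ∃ a₁ a₂ : ℝ, f a₁ = 0 ∧ f a₂ = 0 ∧
      a₂ < -1 ∧ -1 < a₁ ∧ a₁ < 0 ∧
      ∀ x : ℝ, f x = 0 → x = a₁ ∨ x = a₂ := by
  have hNT : (1 : ℝ) < N * T := by norm_cast; nlinarith
  have hMN : (1 : ℝ) < M * N := by norm_cast; nlinarith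
  have hneg : ((N : ℝ) * T - 1) * (-1) ^ 2 + ((M : ℝ) * N * T - M + N - T) * (-1)
      + ((M : ℝ) * N - 1) < 0 := by
    exact_mod_cast quadratic_neg_at_neg_one M N T hM hN hT hnot
  simp only [hf]
  exact exists_quadratic_roots_of_neg_of_pos (by linarith) hneg (by norm_num) (by simpa using hMN)
end

section
/- Let m, n, t be integers with m ≤ -1, n ≤ -1, t ≤ -1, not all equal to -1, and let a, b, c be nonzero real numbers satisfying 1 + a + 1/b = m, 1 + b + 1/c = n, 1 + c + 1/a = t. Then the determinant of the 3×3 real matrix with rows (0, 1, a), (b, 0, 1), (1, c, 0) equals 1 + a·b·c, and 1 + a·b·c ≠ 0. -/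
/-!
If `1 + abc = 0`, put `x = a + 1/b`, `y = b + 1/c`, `z = c + 1/a`. Expanding the product gives
`xyz = abc + 1/(abc) + x + y + z`, so `xyz = x + y + z - 2`. Here `x = m - 1`, `y = n - 1`,
`z = t - 1` are integers `≤ -2`, and for such integers this equation forces `x = y = z = -2`,
i.e. `m = n = t = -1`.
-/

theorem Matrix.det_cyclic_fin_three {R : Type*} [CommRing R] (a b c : R) :
    (!![0, 1, a; b, 0, 1; 1, c, 0] : Matrix (Fin 3) (Fin 3) R).det = 1 + a * b * c := by
  simp [Matrix.det_fin_three]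

theorem mul_add_inv_cyclic {K : Type*} [Field K] {a b c : K} (ha : a ≠ 0) (hb : b ≠ 0)
    (hc : c ≠ 0) :
    (a + b⁻¹) * (b + c⁻¹) * (c + a⁻¹) =
      a * b * c + (a * b * c)⁻¹ + (a + b⁻¹) + (b + c⁻¹) + (c + a⁻¹) := by
  field_simp
  ring

theorem Int.eq_neg_two_of_mul_eq_add_sub_two {x y z : ℤ} (hx : x ≤ -2) (hy : y ≤ -2)
    (hz : z ≤ -2) (h : x * y * z = x + y + z - 2) : x = -2 ∧ y = -2 ∧ z = -2 := by
  have hx' : 0 ≤ -2 - x := by omega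
  have hy' : 0 ≤ -2 - y := by omega
  have hz' : 0 ≤ -2 - z := by omega
  -- With `u = -2 - x` etc.: `-xyz = (u+2)(v+2)(w+2) ≥ 8 + 4(u+v+w)`, `-(x+y+z-2) = 8 + u+v+w`.
  have : x + y + z ≥ -6 := by
    nlinarith [mul_nonneg hx' hy', mul_nonneg hy' hz', mul_nonneg hx' hz',
      mul_nonneg (mul_nonneg hx' hy') hz']
  omega

/-- For integers m, n, t ≤ -1, not all -1, and a nonzero real solution
(a, b, c) of the Q(m,n,t) system, the determinant of the Cartan matrix of
Q±(m,n,t) equals 1 + abc, which is nonzero. -/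
theorem Q_Cartan_matrix_det
    (m n t : ℤ) (hm : m ≤ -1) (hn : n ≤ -1) (ht : t ≤ -1)
    (hnot : ¬(m = -1 ∧ n = -1 ∧ t = -1))
    (a b c : ℝ) (ha : a ≠ 0) (hb : b ≠ 0) (hc : c ≠ 0)
    (h1 : 1 + a + 1 / b = (m : ℝ)) (h2 : 1 + b + 1 / c = (n : ℝ))
    (h3 : 1 + c + 1 / a = (t : ℝ)) :
    (!![0, 1, a; b, 0, 1; 1, c, 0] : Matrix (Fin 3) (Fin 3) ℝ).det = 1 + a * b * c ∧
    1 + a * b * c ≠ 0 := by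
  refine ⟨Matrix.det_cyclic_fin_three a b c, fun habc => hnot ?_⟩
  have habc_eq : a * b * c = -1 := by linear_combination habc
  have hx : a + b⁻¹ = m - 1 := by linear_combination h1
  have hy : b + c⁻¹ = n - 1 := by linear_combination h2
  have hz : c + a⁻¹ = t - 1 := by linear_combination h3
  have hreal := mul_add_inv_cyclic ha hb hc
  rw [habc_eq, inv_neg, inv_one, hx, hy, hz] at hreal
  have hint : (m - 1) * (n - 1) * (t - 1) = (m - 1) + (n - 1) + (t - 1) - 2 := by
    exact_mod_cast (by linear_combination hreal :
      ((m : ℝ) - 1) * (n - 1) * (t - 1) = (m - 1) + (n - 1) + (t - 1) - 2)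
  obtain ⟨hm', hn', ht'⟩ :=
    Int.eq_neg_two_of_mul_eq_add_sub_two (by omega) (by omega) (by omega) hint
  omega
end

section
/- Let m, n, t be integers with m ≤ -1, n ≤ -1, t ≤ -1, not all equal to -1, and let a, b, c be nonzero real numbers satisfying 1 + a + 1/b = m, 1 + b + 1/c = n, 1 + c + 1/a = t. Then there do not exist nonzero real numbers d₁, d₂, d₃ such that the matrix D·A is symmetric, where D is the diagonal matrix with diagonal entries d₁, d₂, d₃ and A is the 3×3 matrix with rows (0, 1, a), (b, 0, 1), (1, c, 0). That is, the Cartan matrix of Q±(m,n,t) is not symmetrizable. -/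
/-!
If `D·A` is symmetric for an invertible diagonal `D`, the products of the entries of `A` around
the cycle `0 → 1 → 2 → 0` and around the reverse cycle agree, which here says `abc = 1`.
Writing `x = a + 1/b = m - 1`, `y = n - 1`, `z = t - 1`, the identity
`(a + 1/b)(b + 1/c)(c + 1/a) = abc + 1/(abc) + a + b + c + 1/a + 1/b + 1/c`
then gives `xyz = x + y + z + 2`, which is impossible once `x, y, z ≤ -2`.
-/

namespace Matrix

theorem IsSymm.diagonal_mul_cycle {ι R : Type*} [Fintype ι] [DecidableEq ι] [CommRing R]
    [NoZeroDivisors R] {d : ι → R} {A : Matrix ι ι R} (hd : ∀ i, d i ≠ 0)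
    (hsym : (diagonal d * A).IsSymm) (i j k : ι) :
    A i j * A j k * A k i = A j i * A k j * A i k := by
  have hij := hsym.apply i j
  have hjk := hsym.apply j k
  have hki := hsym.apply k i
  simp only [diagonal_mul] at hij hjk hki
  have hprod : d i * d j * d k * (A i j * A j k * A k i) =
      d i * d j * d k * (A j i * A k j * A i k) := by
    linear_combination (-(d j * A j k * (d k * A k i))) * hij
      - (d j * A j i * (d k * A k i)) * hjk - (d j * A j i * (d k * A k j)) * hki
  exact mul_left_cancel₀ (mul_ne_zero (mul_ne_zero (hd i) (hd j)) (hd k)) hprod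

end Matrix

theorem add_inv_mul_add_inv_mul_add_inv {K : Type*} [Field K] {a b c : K}
    (ha : a ≠ 0) (hb : b ≠ 0) (hc : c ≠ 0) :
    (a + b⁻¹) * (b + c⁻¹) * (c + a⁻¹) =
      a * b * c + (a * b * c)⁻¹ + (a + b + c) + (a⁻¹ + b⁻¹ + c⁻¹) := by
  field_simp
  ring

theorem mul_mul_lt_add_add_add_two {R : Type*} [CommRing R] [LinearOrder R]
    [IsStrictOrderedRing R] {x y z : R} (hx : x ≤ -2) (hy : y ≤ -2) (hz : z ≤ -2) :
    x * y * z < x + y + z + 2 := by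
  have hxy : 4 ≤ x * y := by nlinarith
  nlinarith

theorem Q_Cartan_matrix_not_symmetrizable_general
    (m n t : ℤ) (hm : m ≤ -1) (hn : n ≤ -1) (ht : t ≤ -1)
    (a b c : ℝ)
    (h1 : 1 + a + 1 / b = (m : ℝ)) (h2 : 1 + b + 1 / c = (n : ℝ))
    (h3 : 1 + c + 1 / a = (t : ℝ)) :
    ¬∃ d₁ d₂ d₃ : ℝ, d₁ ≠ 0 ∧ d₂ ≠ 0 ∧ d₃ ≠ 0 ∧
      (Matrix.diagonal ![d₁, d₂, d₃] *
        (!![0, 1, a; b, 0, 1; 1, c, 0] : Matrix (Fin 3) (Fin 3) ℝ)).IsSymm := by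
  rintro ⟨d₁, d₂, d₃, hd₁, hd₂, hd₃, hsym⟩
  have hd : ∀ i, ![d₁, d₂, d₃] i ≠ 0 := by
    intro i
    fin_cases i <;> assumption
  have habc : a * b * c = 1 := by
    have hcycle : 1 = b * c * a := by simpa using hsym.diagonal_mul_cycle hd 0 1 2
    linear_combination -hcycle
  have ha : a ≠ 0 := left_ne_zero_of_mul (left_ne_zero_of_mul_eq_one habc)
  have hb : b ≠ 0 := right_ne_zero_of_mul (left_ne_zero_of_mul_eq_one habc)
  have hc : c ≠ 0 := right_ne_zero_of_mul_eq_one habc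
  have hprod := add_inv_mul_add_inv_mul_add_inv ha hb hc
  rw [habc, inv_one] at hprod
  have hm' : (m : ℝ) ≤ -1 := by exact_mod_cast hm
  have hn' : (n : ℝ) ≤ -1 := by exact_mod_cast hn
  have ht' : (t : ℝ) ≤ -1 := by exact_mod_cast ht
  rw [one_div] at h1 h2 h3
  have hlt := mul_mul_lt_add_add_add_two (x := a + b⁻¹) (y := b + c⁻¹) (z := c + a⁻¹)
    (by linarith) (by linarith) (by linarith)
  linarith

/-- For integers m, n, t ≤ -1, not all -1, and a nonzero real solution
(a, b, c) of the Q(m,n,t) system, the Cartan matrix of Q±(m,n,t) is not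
symmetrizable: there is no invertible diagonal D with D·A symmetric. -/
theorem Q_Cartan_matrix_not_symmetrizable
    (m n t : ℤ) (hm : m ≤ -1) (hn : n ≤ -1) (ht : t ≤ -1)
    (hnot : ¬(m = -1 ∧ n = -1 ∧ t = -1))
    (a b c : ℝ) (ha : a ≠ 0) (hb : b ≠ 0) (hc : c ≠ 0)
    (h1 : 1 + a + 1 / b = (m : ℝ)) (h2 : 1 + b + 1 / c = (n : ℝ))
    (h3 : 1 + c + 1 / a = (t : ℝ)) :
    ¬∃ d₁ d₂ d₃ : ℝ, d₁ ≠ 0 ∧ d₂ ≠ 0 ∧ d₃ ≠ 0 ∧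
      (Matrix.diagonal ![d₁, d₂, d₃] *
        (!![0, 1, a; b, 0, 1; 1, c, 0] : Matrix (Fin 3) (Fin 3) ℝ)).IsSymm :=
  Q_Cartan_matrix_not_symmetrizable_general m n t hm hn ht a b c h1 h2 h3
end

section
/- Let m, n, t be integers with m ≤ -1, n ≤ -1, t ≤ -1, and let a, b, c be nonzero real numbers satisfying 1 + a + 1/b = m, 1 + b + 1/c = n, 1 + c + 1/a = t. If a·b·c = 1, then a·n = m·n - m - n; in particular a is rational. -/
/-! Under `abc = 1` the reciprocals become products, `1/b = ac` and `1/c = ab`, so the first two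
equations read `b (m - 1 - a) = 1` and `b (1 + a) = n - 1`. Eliminating `b` gives
`(n - 1)(m - 1 - a) = 1 + a`, which is linear in `a`: `a n = (m - 1)(n - 1) - 1`. -/

theorem mul_eq_mul_sub_sub_of_mul_mul_eq_one {K : Type*} [Field K] {a b c m n : K}
    (habc : a * b * c = 1) (h1 : 1 + a + 1 / b = m) (h2 : 1 + b + 1 / c = n) :
    a * n = m * n - m - n := by
  have hb : 1 / b = a * c := (eq_one_div_of_mul_eq_one_right (by linear_combination habc)).symm
  have hc : 1 / c = a * b := (eq_one_div_of_mul_eq_one_right (by linear_combination habc)).symm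
  rw [hb] at h1
  rw [hc] at h2
  have hbm : b * (m - 1 - a) = 1 := by linear_combination habc - b * h1
  linear_combination (m - 1 - a) * h2 - (1 + a) * hbm

theorem Q_system_symmetrizable_forces_rational_general
    (m n : ℤ) (hn : n ≤ -1)
    (a b c : ℝ)
    (h1 : 1 + a + 1 / b = (m : ℝ)) (h2 : 1 + b + 1 / c = (n : ℝ))
    (habc : a * b * c = 1) :
    a * (n : ℝ) = (m : ℝ) * (n : ℝ) - (m : ℝ) - (n : ℝ) ∧ ∃ q : ℚ, a = (q : ℝ) := by
  have key := mul_eq_mul_sub_sub_of_mul_mul_eq_one habc h1 h2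
  have hn0 : (n : ℝ) ≠ 0 := by exact_mod_cast (by omega : n ≠ 0)
  refine ⟨key, ((m * n - m - n) / n : ℚ), ?_⟩
  push_cast
  rw [eq_div_iff hn0, key]

/-- For integers m, n, t ≤ -1 and a nonzero real solution (a, b, c) of
the Q(m,n,t) system with abc = 1 (the symmetrizability condition), one has
a·n = mn - m - n; in particular a is rational. -/
theorem Q_system_symmetrizable_forces_rational
    (m n t : ℤ) (hm : m ≤ -1) (hn : n ≤ -1) (ht : t ≤ -1)
    (a b c : ℝ) (ha : a ≠ 0) (hb : b ≠ 0) (hc : c ≠ 0)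
    (h1 : 1 + a + 1 / b = (m : ℝ)) (h2 : 1 + b + 1 / c = (n : ℝ))
    (h3 : 1 + c + 1 / a = (t : ℝ))
    (habc : a * b * c = 1) :
    a * (n : ℝ) = (m : ℝ) * (n : ℝ) - (m : ℝ) - (n : ℝ) ∧ ∃ q : ℚ, a = (q : ℝ) :=
  Q_system_symmetrizable_forces_rational_general m n hn a b c h1 h2 habc
end

section
/- Let A be an n×n complex matrix and k an index such that A k k = 0 and, for every index i, A i k = 0 if and only if A k i = 0. Define the odd reflection r_k(A) = A' by: A' k j = A k j for all j; A' i k = -(A k i)·(A i k) for i ≠ k; and for i ≠ k, j ≠ k: A' i j = A i j if A i k = 0; A' i j = (A k i)·(A i j) if A i k ≠ 0 and A k j = 0; A' i j = (A k i)·(A i j) + (A i k)·(A k j) + (A k i)·(A i k) if A i k ≠ 0 and A k j ≠ 0. Then A' k k = 0 and A' again satisfies the condition that A' i k = 0 if and only if A' k i = 0, so r_k may be applied again; and r_k(r_k(A)) = D·A, where D is the invertible diagonal matrix with D i i = (A k i)² whenever i ≠ k and A k i ≠ 0, and D i i = 1 otherwise. -/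
/-!
Write `B = r_k(A)`. Row `k` is fixed, and `B i k = -(A k i) (A i k)` vanishes exactly when
`A i k` does, so regularity at `k` passes to `B` and in row `i` the second reflection takes
the same branch as the first. Rows with `A k i = 0` are never touched; in the other rows each
branch multiplies `A i j` by `(A k i)²`, the cross terms `± (A k i)(A i k)(A k j)` and
`± (A k i)²(A i k)` cancelling in the generic branch.
-/

open Classical in
/-- The odd reflection of an n×n complex matrix `A` at an index `k` with
`A k k = 0` and `A i k = 0 ↔ A k i = 0` for all `i`. -/
noncomputable def oddReflection {n : ℕ} (A : Matrix (Fin n) (Fin n) ℂ) (k : Fin n) :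
    Matrix (Fin n) (Fin n) ℂ :=
  Matrix.of fun i j =>
    if i = k then A k j
    else if j = k then -(A k i) * A i k
    else if A i k = 0 then A i j
    else if A k j = 0 then A k i * A i j
    else A k i * A i j + A i k * A k j + A k i * A i k

open Matrix

open Classical in
noncomputable def oddReflectionScale {n : ℕ} (A : Matrix (Fin n) (Fin n) ℂ) (k : Fin n) :
    Fin n → ℂ :=
  fun i => if i ≠ k ∧ A k i ≠ 0 then (A k i) ^ 2 else 1

section

variable {n : ℕ} (A : Matrix (Fin n) (Fin n) ℂ) (k : Fin n) {i j : Fin n}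

@[simp]
theorem oddReflection_apply_self_left (j : Fin n) : oddReflection A k k j = A k j := by
  simp [oddReflection]

theorem oddReflection_apply_self_right (hi : i ≠ k) :
    oddReflection A k i k = -(A k i) * A i k := by
  simp [oddReflection, hi]

variable {A k}

theorem oddReflection_apply_of_eq_zero (hi : i ≠ k) (hik : A i k = 0) :
    oddReflection A k i j = A i j := by
  rcases eq_or_ne j k with rfl | hj
  · rw [oddReflection_apply_self_right A j hi, hik, mul_zero]
  · simp [oddReflection, hi, hj, hik]

theorem oddReflection_apply_of_ne_zero_of_eq_zero (hi : i ≠ k) (hj : j ≠ k)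
    (hik : A i k ≠ 0) (hkj : A k j = 0) :
    oddReflection A k i j = A k i * A i j := by
  simp [oddReflection, hi, hj, hik, hkj]

theorem oddReflection_apply_of_ne_zero_of_ne_zero (hi : i ≠ k) (hj : j ≠ k)
    (hik : A i k ≠ 0) (hkj : A k j ≠ 0) :
    oddReflection A k i j = A k i * A i j + A i k * A k j + A k i * A i k := by
  simp [oddReflection, hi, hj, hik, hkj]

theorem oddReflection_apply_self_right_eq_zero_iff (hreg : ∀ i, A i k = 0 ↔ A k i = 0)
    (hi : i ≠ k) : oddReflection A k i k = 0 ↔ A i k = 0 := by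
  rw [oddReflection_apply_self_right A k hi, mul_eq_zero, neg_eq_zero, hreg i, or_self]

theorem oddReflection_isRegular (hreg : ∀ i, A i k = 0 ↔ A k i = 0) (i : Fin n) :
    oddReflection A k i k = 0 ↔ oddReflection A k k i = 0 := by
  rcases eq_or_ne i k with rfl | hi
  · rfl
  rw [oddReflection_apply_self_right_eq_zero_iff hreg hi, oddReflection_apply_self_left, hreg i]

theorem isUnit_diagonal_oddReflectionScale :
    IsUnit (diagonal (oddReflectionScale A k)) := by
  refine isUnit_diagonal.mpr (Pi.isUnit_iff.mpr fun i => isUnit_iff_ne_zero.mpr ?_)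
  unfold oddReflectionScale
  split_ifs with h
  exacts [pow_ne_zero 2 h.2, one_ne_zero]

theorem oddReflection_oddReflection (hreg : ∀ i, A i k = 0 ↔ A k i = 0) :
    oddReflection (oddReflection A k) k = diagonal (oddReflectionScale A k) * A := by
  ext i j
  rw [diagonal_mul]
  rcases eq_or_ne i k with rfl | hi
  · simp [oddReflectionScale]
  rcases eq_or_ne (A k i) 0 with hki | hki
  · have hik : A i k = 0 := (hreg i).mpr hki
    have hBik : oddReflection A k i k = 0 :=
      (oddReflection_apply_self_right_eq_zero_iff hreg hi).mpr hik
    rw [oddReflection_apply_of_eq_zero hi hBik, oddReflection_apply_of_eq_zero hi hik,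
      oddReflectionScale, if_neg (by tauto), one_mul]
  have hik : A i k ≠ 0 := fun h => hki ((hreg i).mp h)
  rw [oddReflectionScale, if_pos ⟨hi, hki⟩]
  rcases eq_or_ne j k with rfl | hj
  · rw [oddReflection_apply_self_right _ _ hi, oddReflection_apply_self_left,
      oddReflection_apply_self_right _ _ hi]
    ring
  have hBik : oddReflection A k i k ≠ 0 :=
    (oddReflection_apply_self_right_eq_zero_iff hreg hi).not.mpr hik
  have hBkj : oddReflection A k k j = A k j := oddReflection_apply_self_left A k j
  rcases eq_or_ne (A k j) 0 with hkj | hkj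
  · rw [oddReflection_apply_of_ne_zero_of_eq_zero hi hj hBik (hBkj.trans hkj),
      oddReflection_apply_of_ne_zero_of_eq_zero hi hj hik hkj]
    simp only [oddReflection_apply_self_left]
    ring
  · rw [oddReflection_apply_of_ne_zero_of_ne_zero hi hj hBik (hBkj ▸ hkj),
      oddReflection_apply_of_ne_zero_of_ne_zero hi hj hik hkj,
      oddReflection_apply_self_right A k hi]
    simp only [oddReflection_apply_self_left]
    ring

end

open Classical in
/-- The odd reflection at a regular isotropic index `k` preserves the
conditions `A k k = 0` and regularity at `k`, and applying it twice returns the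
original matrix up to left multiplication by the invertible diagonal matrix `D` with
`D i i = (A k i)²` when `i ≠ k` and `A k i ≠ 0`, and `D i i = 1` otherwise. -/
theorem oddReflection_twice
    {n : ℕ} (A : Matrix (Fin n) (Fin n) ℂ) (k : Fin n)
    (hkk : A k k = 0) (hreg : ∀ i, A i k = 0 ↔ A k i = 0) :
    oddReflection A k k k = 0 ∧
    (∀ i, oddReflection A k i k = 0 ↔ oddReflection A k k i = 0) ∧
    IsUnit (Matrix.diagonal
      (fun i => if i ≠ k ∧ A k i ≠ 0 then (A k i) ^ 2 else 1) :
        Matrix (Fin n) (Fin n) ℂ) ∧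
    oddReflection (oddReflection A k) k =
      (Matrix.diagonal
        (fun i => if i ≠ k ∧ A k i ≠ 0 then (A k i) ^ 2 else 1) :
          Matrix (Fin n) (Fin n) ℂ) * A :=
  ⟨(oddReflection_apply_self_left A k k).trans hkk, oddReflection_isRegular hreg,
    isUnit_diagonal_oddReflectionScale, oddReflection_oddReflection hreg⟩
end
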